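/- For all integers m ≥ 0, k ≥ 1 and every real number x, E_{m,q}^{(0,k)}(x) = Σ_{i=0}^{m} C(m,i) E_{i,q}^{(0,k)} · [x]_q^{m−i} · q^{ix}. -/

import Mathlib

open Finset

/-- The q-number `[x]_q = (1 - q^x)/(1 - q)`, with `q^x = exp (x * log q)` (rpow). -/
noncomputable def qNum (q x : ℝ) : ℝ := (1 - q ^ x) / (1 - q)

/-- `[l]_{-q} = (1 - (-q)^l)/(1 + q)` for a natural number `l`. -/
noncomputable def qNumNeg (q : ℝ) (l : ℕ) : ℝ := (1 - (-q) ^ l) / (1 + q)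

/-- The higher-order q-Euler polynomial
`E_{m,q}^{(h,k)}(x) = ((1+q)^k/(1-q)^m) * Σ_{j=0}^m C(m,j) (-1)^j q^{jx} / Π_{i=0}^{k-1} (1 + q^{h+j-i})`. -/
noncomputable def qE (q : ℝ) (h : ℤ) (k m : ℕ) (x : ℝ) : ℝ :=
  ((1 + q) ^ k / (1 - q) ^ m) *
    ∑ j ∈ Finset.range (m + 1),
      (m.choose j : ℝ) * (-1) ^ j * q ^ ((j : ℝ) * x) /
        ∏ i ∈ Finset.range k, (1 + q ^ ((h : ℝ) + (j : ℝ) - (i : ℝ)))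

/-
With `u = q^x`, both sides are `(1+q)^k/(1-q)^m` times a polynomial in `u`, and `[x]_q^{m-i}`
contributes `(1-u)^{m-i}/(1-q)^{m-i}`. The identity is then the binomial-transform identity
`Σ_i C(m,i) (Σ_{j≤i} C(i,j) c_j) u^i (1-u)^{m-i} = Σ_j C(m,j) c_j u^j`, which follows from
`C(m,i) C(i,j) = C(m,j) C(m-j,i-j)` and the binomial theorem for `(u + (1-u))^{m-j}`.
-/

section BinomialTransform

variable {R : Type*} [CommSemiring R]

theorem sum_range_choose_mul_choose_mul_pow_mul_pow {m j : ℕ} (hj : j ≤ m) (a b : R) :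
    ∑ i ∈ range (m + 1), (m.choose i * i.choose j : R) * a ^ i * b ^ (m - i) =
      m.choose j * a ^ j * (a + b) ^ (m - j) := by
  have hsplit : m + 1 = j + (m - j + 1) := by omega
  rw [hsplit, sum_range_add, add_pow, mul_sum]
  have hlow : ∑ i ∈ range j, (m.choose i * i.choose j : R) * a ^ i * b ^ (m - i) = 0 :=
    sum_eq_zero fun i hi => by simp [Nat.choose_eq_zero_of_lt (mem_range.mp hi)]
  rw [hlow, zero_add]
  refine sum_congr rfl fun t ht => ?_
  have hchoose : (m.choose (j + t) * (j + t).choose j : R) = m.choose j * (m - j).choose t := by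
    rw [← Nat.cast_mul, Nat.choose_mul (Nat.le_add_right j t), Nat.add_sub_cancel_left,
      Nat.cast_mul]
  rw [hchoose, pow_add, show m - (j + t) = m - j - t by omega]
  ring

theorem sum_range_choose_mul_sum_choose_mul_pow_mul_pow (m : ℕ) (c : ℕ → R) (a b : R) :
    ∑ i ∈ range (m + 1),
        (m.choose i : R) * (∑ j ∈ range (i + 1), (i.choose j : R) * c j) * a ^ i * b ^ (m - i) =
      ∑ j ∈ range (m + 1), (m.choose j : R) * c j * a ^ j * (a + b) ^ (m - j) := by
  have hextend : ∀ i ∈ range (m + 1),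
      ∑ j ∈ range (i + 1), (i.choose j : R) * c j =
        ∑ j ∈ range (m + 1), (i.choose j : R) * c j :=
    fun i hi => sum_subset (range_subset_range.mpr (by simpa using hi)) fun j _ hj => by
      simp [Nat.choose_eq_zero_of_lt (by simpa using hj : i < j)]
  rw [sum_congr rfl fun i hi => by rw [hextend i hi]]
  simp_rw [mul_sum, sum_mul]
  rw [sum_comm]
  refine sum_congr rfl fun j hj => ?_
  calc ∑ i ∈ range (m + 1), (m.choose i : R) * (i.choose j * c j) * a ^ i * b ^ (m - i)
      = c j * ∑ i ∈ range (m + 1), (m.choose i * i.choose j : R) * a ^ i * b ^ (m - i) := by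
        rw [mul_sum]
        exact sum_congr rfl fun i _ => by ring
    _ = m.choose j * c j * a ^ j * (a + b) ^ (m - j) := by
        rw [sum_range_choose_mul_choose_mul_pow_mul_pow (mem_range_succ_iff.mp hj)]
        ring

end BinomialTransform

noncomputable def qECoeff (q : ℝ) (h : ℤ) (k j : ℕ) : ℝ :=
  (-1) ^ j / ∏ i ∈ range k, (1 + q ^ ((h : ℝ) + (j : ℝ) - (i : ℝ)))

theorem qE_eq_sum_pow {q : ℝ} (hq : 0 ≤ q) (h : ℤ) (k m : ℕ) (x : ℝ) :
    qE q h k m x =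
      (1 + q) ^ k / (1 - q) ^ m *
        ∑ j ∈ range (m + 1), (m.choose j : ℝ) * qECoeff q h k j * (q ^ x) ^ j := by
  unfold qE qECoeff
  congr 1
  refine sum_congr rfl fun j _ => ?_
  rw [mul_comm (j : ℝ), Real.rpow_mul_natCast hq]
  ring

theorem stmt_3 (q : ℝ) (hq : 0 < q) (m k : ℕ) (x : ℝ) :
    qE q 0 k m x =
      ∑ i ∈ Finset.range (m + 1),
        (m.choose i : ℝ) * qE q 0 k i 0 * qNum q x ^ (m - i) * q ^ ((i : ℝ) * x) := by
  have hterm : ∀ i ∈ range (m + 1),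
      (m.choose i : ℝ) * qE q 0 k i 0 * qNum q x ^ (m - i) * q ^ ((i : ℝ) * x) =
        (1 + q) ^ k / (1 - q) ^ m * ((m.choose i : ℝ) *
          (∑ j ∈ range (i + 1), (i.choose j : ℝ) * qECoeff q 0 k j) *
            (q ^ x) ^ i * (1 - q ^ x) ^ (m - i)) := by
    intro i hi
    have hden : (1 - q) ^ m = (1 - q) ^ i * (1 - q) ^ (m - i) := by
      rw [← pow_add, Nat.add_sub_cancel' (mem_range_succ_iff.mp hi)]
    rw [qE_eq_sum_pow hq.le, Real.rpow_zero, mul_comm (i : ℝ), Real.rpow_mul_natCast hq.le,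
      qNum, div_pow, hden, ← div_div]
    simp only [one_pow, mul_one]
    ring
  rw [sum_congr rfl hterm, ← mul_sum, sum_range_choose_mul_sum_choose_mul_pow_mul_pow,
    qE_eq_sum_pow hq.le]
  simp only [add_sub_cancel, one_pow, mul_one]
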